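/- arXiv:2512.01802 — 4 statements merged into one kernel-verified Lean document; each statement's English description precedes it below -/
import Mathlib

section
/- Frontier Sufficiency (Lemma 2.2). Let s ∈ V be a source vertex and let d : ℕ → V → EReal be a sequence of distance estimates satisfying: (i) d 0 s = 0 and d 0 v = ⊤ for every v ≠ s; (ii) monotonicity: d (t+1) v ≤ d t v for all t and v; (iii) frontier relaxation: defining the frontier F(0) = {s} and F(t) = {v : d t v < d (t−1) v} for t ≥ 1, for every t ≥ 0, every u ∈ F(t) and every edge (u,v) one has d (t+1) v ≤ d t u + w u v. Then for every t ≥ 0, every vertex v, and every walk P from s to v with at most t edges, d t v ≤ weight(P). In particular, d (|V|−1) v is at most the minimum weight over all walks from s to v with at most |V|−1 edges. -/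
/-- `IsWalk E p t a b` : `p 0 = a`, `p t = b`, and each consecutive pair is an edge. -/
def IsWalk {V : Type*} (E : V → V → Prop) (p : ℕ → V) (t : ℕ) (a b : V) : Prop :=
  p 0 = a ∧ p t = b ∧ ∀ i < t, E (p i) (p (i + 1))

/-- Weight of a walk with `t` edges. -/
def walkWeight {V : Type*} (w : V → V → ℝ) (p : ℕ → V) (t : ℕ) : ℝ :=
  ∑ i ∈ Finset.range t, w (p i) (p (i + 1))

/-!
Induction on the length of the walk. If the prefix of a walk ends at `u` with
`d l u ≤ weight` (so `d l u` is finite), look at the last time `t ≤ l` at which the estimate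
of `u` changed: either `t = 0` and then `u = s`, or `d t u < d (t - 1) u`. In both cases `u` is on
the frontier `F t`, so its outgoing edges were relaxed at time `t + 1 ≤ l + 1` with the value
`d t u = d l u`, and monotonicity carries the bound to time `l + 1`.
-/

theorem Antitone.exists_le_eq_and_lt_of_eq_succ {α : Type*} [PartialOrder α] {f : ℕ → α}
    (hf : Antitone f) (l : ℕ) : ∃ t ≤ l, f t = f l ∧ ∀ k, t = k + 1 → f t < f k := by
  induction l with
  | zero => exact ⟨0, le_rfl, rfl, by omega⟩
  | succ l ih =>
    rcases (hf l.le_succ).lt_or_eq with hdrop | hstay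
    · refine ⟨l + 1, le_rfl, rfl, fun k hk => ?_⟩
      obtain rfl : k = l := by omega
      exact hdrop
    · obtain ⟨t, htl, hft, hdrop⟩ := ih
      exact ⟨t, htl.trans l.le_succ, hft.trans hstay.symm, hdrop⟩

theorem IsWalk.eq_of_length_zero {V : Type*} {E : V → V → Prop} {p : ℕ → V} {a b : V}
    (hp : IsWalk E p 0 a b) : a = b :=
  hp.1.symm.trans hp.2.1

theorem IsWalk.prefix_and_last_edge {V : Type*} {E : V → V → Prop} {p : ℕ → V} {l : ℕ}
    {a b : V} (hp : IsWalk E p (l + 1) a b) : IsWalk E p l a (p l) ∧ E (p l) b :=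
  ⟨⟨hp.1, rfl, fun i hi => hp.2.2 i (by omega)⟩, hp.2.1 ▸ hp.2.2 l l.lt_succ_self⟩

theorem walkWeight_succ {V : Type*} (w : V → V → ℝ) (p : ℕ → V) (l : ℕ) :
    walkWeight w p (l + 1) = walkWeight w p l + w (p l) (p (l + 1)) :=
  Finset.sum_range_succ _ _

section FrontierRelaxation

variable {V : Type*} {E : V → V → Prop} {w : V → V → ℝ} {s : V} {d : ℕ → V → EReal}
  {F : ℕ → Set V}

theorem exists_mem_frontier_of_ne_top (h0 : ∀ v : V, v ≠ s → d 0 v = ⊤)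
    (hmono : ∀ (t : ℕ) (v : V), d (t + 1) v ≤ d t v) (hF0 : F 0 = {s})
    (hFt : ∀ t : ℕ, F (t + 1) = {v : V | d (t + 1) v < d t v}) {l : ℕ} {u : V}
    (hu : d l u ≠ ⊤) : ∃ t ≤ l, d t u = d l u ∧ u ∈ F t := by
  obtain ⟨t, htl, heq, hdrop⟩ :=
    (antitone_nat_of_succ_le (f := (d · u)) (hmono · u)).exists_le_eq_and_lt_of_eq_succ l
  refine ⟨t, htl, heq, ?_⟩
  cases t with
  | zero =>
    rw [hF0, Set.mem_singleton_iff]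
    by_contra hne
    exact hu (heq.symm.trans (h0 u hne))
  | succ k =>
    rw [hFt]
    exact hdrop k rfl

theorem le_walkWeight_of_isWalk (h0s : d 0 s = 0) (h0 : ∀ v : V, v ≠ s → d 0 v = ⊤)
    (hmono : ∀ (t : ℕ) (v : V), d (t + 1) v ≤ d t v) (hF0 : F 0 = {s})
    (hFt : ∀ t : ℕ, F (t + 1) = {v : V | d (t + 1) v < d t v})
    (hrelax : ∀ (t : ℕ) (u v : V), u ∈ F t → E u v → d (t + 1) v ≤ d t u + (w u v : EReal))
    (p : ℕ → V) (l : ℕ) {v : V} (hp : IsWalk E p l s v) :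
    d l v ≤ (walkWeight w p l : EReal) := by
  induction l generalizing v with
  | zero =>
    obtain rfl := hp.eq_of_length_zero
    simp [h0s, walkWeight]
  | succ l ih =>
    obtain ⟨hprefix, hedge⟩ := hp.prefix_and_last_edge
    have hprefix_le := ih hprefix
    obtain ⟨t, htl, heq, hmem⟩ := exists_mem_frontier_of_ne_top h0 hmono hF0 hFt
      (ne_top_of_le_ne_top (EReal.coe_ne_top _) hprefix_le)
    calc d (l + 1) v ≤ d (t + 1) v :=
          antitone_nat_of_succ_le (f := (d · v)) (hmono · v) (by omega)
      _ ≤ d t (p l) + (w (p l) v : EReal) := hrelax t _ _ hmem hedge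
      _ = d l (p l) + (w (p l) v : EReal) := by rw [heq]
      _ ≤ (walkWeight w p l : EReal) + (w (p l) v : EReal) := by gcongr
      _ = (walkWeight w p (l + 1) : EReal) := by rw [walkWeight_succ, hp.2.1, EReal.coe_add]

end FrontierRelaxation

theorem frontier_sufficiency_general
    {V : Type*} [Fintype V]
    (E : V → V → Prop) (w : V → V → ℝ) (s : V)
    (d : ℕ → V → EReal)
    (h0s : d 0 s = 0) (h0 : ∀ v : V, v ≠ s → d 0 v = ⊤)
    (hmono : ∀ (t : ℕ) (v : V), d (t + 1) v ≤ d t v)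
    (F : ℕ → Set V)
    (hF0 : F 0 = {s})
    (hFt : ∀ t : ℕ, F (t + 1) = {v : V | d (t + 1) v < d t v})
    (hrelax : ∀ (t : ℕ) (u v : V), u ∈ F t → E u v →
      d (t + 1) v ≤ d t u + (w u v : EReal)) :
    (∀ (t : ℕ) (v : V) (p : ℕ → V) (l : ℕ), l ≤ t → IsWalk E p l s v →
      d t v ≤ (walkWeight w p l : EReal)) ∧
    (∀ (v : V) (p : ℕ → V) (l : ℕ), l ≤ Fintype.card V - 1 → IsWalk E p l s v →
      d (Fintype.card V - 1) v ≤ (walkWeight w p l : EReal)) := by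
  have hwalk : ∀ (t : ℕ) (v : V) (p : ℕ → V) (l : ℕ), l ≤ t → IsWalk E p l s v →
      d t v ≤ (walkWeight w p l : EReal) := fun t v p l hlt hp =>
    (antitone_nat_of_succ_le (f := (d · v)) (hmono · v) hlt).trans
      (le_walkWeight_of_isWalk h0s h0 hmono hF0 hFt hrelax p l hp)
  exact ⟨hwalk, fun v => hwalk _ v⟩

/-- Frontier Sufficiency (Lemma 2.2). -/
theorem frontier_sufficiency
    {V : Type*} [Fintype V] [Nonempty V]
    (E : V → V → Prop) (w : V → V → ℝ) (s : V)
    (d : ℕ → V → EReal)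
    (h0s : d 0 s = 0) (h0 : ∀ v : V, v ≠ s → d 0 v = ⊤)
    (hmono : ∀ (t : ℕ) (v : V), d (t + 1) v ≤ d t v)
    (F : ℕ → Set V)
    (hF0 : F 0 = {s})
    (hFt : ∀ t : ℕ, F (t + 1) = {v : V | d (t + 1) v < d t v})
    (hrelax : ∀ (t : ℕ) (u v : V), u ∈ F t → E u v →
      d (t + 1) v ≤ d t u + (w u v : EReal)) :
    (∀ (t : ℕ) (v : V) (p : ℕ → V) (l : ℕ), l ≤ t → IsWalk E p l s v →
      d t v ≤ (walkWeight w p l : EReal)) ∧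
    (∀ (v : V) (p : ℕ → V) (l : ℕ), l ≤ Fintype.card V - 1 → IsWalk E p l s v →
      d (Fintype.card V - 1) v ≤ (walkWeight w p l : EReal)) :=
  frontier_sufficiency_general E w s d h0s h0 hmono F hF0 hFt hrelax
end

section
/- Realizability of Bellman–Ford values (lower-bound half of correctness: relaxations cannot go below the true distance). For the Bellman–Ford iterates d from source s, for every t ≥ 0 and every vertex v with d t v ≠ ⊤, there exists a walk from s to v with at most t edges whose weight equals d t v. Consequently d t v is at least the infimum of walk weights from s to v. -/
open Classical in
/-- Bellman–Ford iterates from source `s`. -/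
noncomputable def BF {V : Type*} (E : V → V → Prop) (w : V → V → ℝ) (s : V) :
    ℕ → V → EReal
  | 0, v => if v = s then 0 else ⊤
  | (t + 1), v =>
      min (BF E w s t v) (⨅ u : {u : V // E u v}, (BF E w s t u.1 + (w u.1 v : EReal)))

/-- Realizability of Bellman–Ford values: every finite iterate value is the weight
of some walk from `s` with at most `t` edges; consequently `d t v` is at least the
infimum of walk weights from `s` to `v`. -/
theorem bellmanFord_realizable
    {V : Type*} [Fintype V] [Nonempty V]
    (E : V → V → Prop) (w : V → V → ℝ) (s : V) :
    (∀ (t : ℕ) (v : V), BF E w s t v ≠ ⊤ →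
      ∃ (p : ℕ → V) (l : ℕ), l ≤ t ∧ IsWalk E p l s v ∧
        (walkWeight w p l : EReal) = BF E w s t v) ∧
    (∀ (t : ℕ) (v : V),
      (⨅ (p : ℕ → V) (l : ℕ) (_ : IsWalk E p l s v), (walkWeight w p l : EReal))
        ≤ BF E w s t v) := by

  have main : ∀ (t : ℕ) (v : V), BF E w s t v ≠ ⊤ →
      ∃ (p : ℕ → V) (l : ℕ), l ≤ t ∧ IsWalk E p l s v ∧
        (walkWeight w p l : EReal) = BF E w s t v := by
    intro t
    induction t with
    | zero =>
      intro v hv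
      rw [BF] at hv ⊢
      by_cases h : v = s
      · subst h
        refine ⟨fun _ => v, 0, le_refl 0, ⟨rfl, rfl, by omega⟩, ?_⟩
        simp [walkWeight]
      · simp [h] at hv
    | succ t ih =>
      intro v hv
      rw [BF] at hv ⊢
      rcases le_total (BF E w s t v)
          (⨅ u : {u : V // E u v}, (BF E w s t u.1 + (w u.1 v : EReal))) with h | h
      · rw [min_eq_left h] at hv ⊢
        obtain ⟨p, l, hl, hwp, heq⟩ := ih v hv
        exact ⟨p, l, hl.trans (Nat.le_succ t), hwp, heq⟩
      · rw [min_eq_right h] at hv ⊢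
        haveI : Nonempty {u : V // E u v} := by
          by_contra hne
          rw [not_nonempty_iff] at hne
          simp [iInf_of_empty] at hv
        obtain ⟨u, hu⟩ := Finite.exists_min
          (fun u : {u : V // E u v} => BF E w s t u.1 + (w u.1 v : EReal))
        have hinf : (⨅ u : {u : V // E u v}, (BF E w s t u.1 + (w u.1 v : EReal)))
            = BF E w s t u.1 + (w u.1 v : EReal) :=
          le_antisymm (iInf_le _ u) (le_iInf hu)
        rw [hinf] at hv ⊢
        have hBu : BF E w s t u.1 ≠ ⊤ := by
          intro h'
          rw [h'] at hv
          exact hv (by simp)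
        obtain ⟨p, l, hl, hwp, heq⟩ := ih u.1 hBu
        refine ⟨fun i => if i ≤ l then p i else v, l + 1, by omega, ⟨?_, ?_, ?_⟩, ?_⟩
        · simpa using hwp.1
        · simp
        · intro i hi
          rcases Nat.lt_or_ge i l with hil | hil
          · have h1 : i ≤ l := hil.le
            have h2 : i + 1 ≤ l := hil
            simp only [h1, h2, if_pos]
            exact hwp.2.2 i hil
          · have : i = l := by omega
            subst this
            simp only [le_refl, if_pos, Nat.lt_irrefl]
            rw [if_neg (by omega)]
            rw [hwp.2.1]
            exact u.2
        · have hsum : walkWeight w (fun i => if i ≤ l then p i else v) (l + 1)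
              = walkWeight w p l + w u.1 v := by
            unfold walkWeight
            rw [Finset.sum_range_succ]
            congr 1
            · apply Finset.sum_congr rfl
              intro i hi
              rw [Finset.mem_range] at hi
              have h1 : i ≤ l := hi.le
              have h2 : i + 1 ≤ l := hi
              simp [h1, h2]
            · show w (if l ≤ l then p l else v) (if l + 1 ≤ l then p (l + 1) else v) = w u.1 v
              rw [if_pos le_rfl, if_neg (by omega), hwp.2.1]
          rw [hsum]
          push_cast
          rw [heq]
  refine ⟨main, ?_⟩
  intro t v
  by_cases hv : BF E w s t v = ⊤
  · rw [hv]; exact le_top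
  · obtain ⟨p, l, _, hwp, heq⟩ := main t v hv
    calc (⨅ (p : ℕ → V) (l : ℕ) (_ : IsWalk E p l s v), (walkWeight w p l : EReal))
        ≤ (walkWeight w p l : EReal) := by
          exact iInf_le_of_le p (iInf_le_of_le l (iInf_le_of_le hwp le_rfl))
      _ = BF E w s t v := heq
end

section
/- Path shortening under no reachable negative cycle. Suppose every cycle reachable from s has nonnegative total weight. Then for every vertex v and every walk W from s to v, there exists a walk W′ from s to v with at most |V| − 1 edges such that weight(W′) ≤ weight(W). In particular, the infimum of walk weights from s to v over all walks equals the minimum over walks with at most |V| − 1 edges. -/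
private lemma splice_step
    {V : Type*} [Fintype V] [Nonempty V]
    (E : V → V → Prop) (w : V → V → ℝ) (s : V)
    (hnoneg : ∀ (c : V) (p : ℕ → V) (l : ℕ), 1 ≤ l → IsWalk E p l c c →
      (∃ (q : ℕ → V) (lq : ℕ), IsWalk E q lq s c) → 0 ≤ walkWeight w p l)
    (v : V) (p : ℕ → V) (l : ℕ) (hw : IsWalk E p l s v) (hl : Fintype.card V ≤ l) :
    ∃ (q : ℕ → V) (l' : ℕ), l' < l ∧ IsWalk E q l' s v ∧
      walkWeight w q l' ≤ walkWeight w p l := by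
  obtain ⟨h0, hv, he⟩ := hw
  have key : ∀ i j : ℕ, i < j → j ≤ l → p i = p j →
      ∃ (q : ℕ → V) (l' : ℕ), l' < l ∧ IsWalk E q l' s v ∧
        walkWeight w q l' ≤ walkWeight w p l := by
    intro i j hij hjl hpij
    set d := j - i with hd
    set l' := l - d with hl'
    have hid : i + d = j := by omega
    have hld : l' + d = l := by omega
    have hil' : i ≤ l' := by omega
    have hd1 : 1 ≤ d := by omega
    set q : ℕ → V := fun k => if k ≤ i then p k else p (k + d) with hq
    have hq0 : q 0 = s := by simp [hq, h0]
    have hqend : q l' = v := by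
      by_cases h : l' ≤ i
      · have : l' = i := le_antisymm h hil'
        have hjeq : j = l := by omega
        simp only [hq, this, le_refl, if_pos]
        rw [hpij, hjeq, hv]
      · simp only [hq, if_neg h]
        rw [show l' + d = l from hld, hv]
    have hqedge : ∀ k < l', E (q k) (q (k + 1)) := by
      intro k hk
      by_cases h1 : k + 1 ≤ i
      · simp only [hq, if_pos (by omega : k ≤ i), if_pos h1]
        exact he k (by omega)
      · by_cases h2 : k ≤ i
        · have hki : k = i := by omega
          simp only [hq, if_pos h2, if_neg h1]
          rw [hki, hpij, show i + 1 + d = j + 1 from by omega]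
          exact he j (by omega)
        · simp only [hq, if_neg h2, if_neg (by omega : ¬ k + 1 ≤ i)]
          rw [show k + 1 + d = k + d + 1 from by omega]
          exact he (k + d) (by omega)
    have hqw : walkWeight w q l' =
        ∑ k ∈ Finset.range i, w (p k) (p (k + 1)) +
        ∑ k ∈ Finset.range (l - j), w (p (j + k)) (p (j + k + 1)) := by
      unfold walkWeight
      rw [show l' = i + (l - j) from by omega, Finset.sum_range_add]
      congr 1
      · refine Finset.sum_congr rfl fun k hk => ?_
        simp only [Finset.mem_range] at hk
        simp only [hq, if_pos (by omega : k ≤ i), if_pos (by omega : k + 1 ≤ i)]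
      · refine Finset.sum_congr rfl fun k hk => ?_
        have hq2 : q (i + k + 1) = p (j + k + 1) := by
          simp only [hq, if_neg (by omega : ¬ i + k + 1 ≤ i)]
          congr 1; omega
        have hq1 : q (i + k) = p (j + k) := by
          rcases Nat.eq_zero_or_pos k with hk0 | hk0
          · subst hk0
            simp only [hq, Nat.add_zero, le_refl, if_pos]
            rw [hpij]
          · simp only [hq, if_neg (by omega : ¬ i + k ≤ i)]
            congr 1; omega
        rw [hq1, hq2]
    have hpw : walkWeight w p l =
        (∑ k ∈ Finset.range i, w (p k) (p (k + 1)) +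
         ∑ k ∈ Finset.range d, w (p (i + k)) (p (i + k + 1))) +
        ∑ k ∈ Finset.range (l - j), w (p (j + k)) (p (j + k + 1)) := by
      have hsplit := Finset.sum_range_add (fun k => w (p k) (p (k + 1))) (i + d) (l - j)
      have hsplit2 := Finset.sum_range_add (fun k => w (p k) (p (k + 1))) i d
      rw [show (i + d) + (l - j) = l from by omega] at hsplit
      unfold walkWeight
      rw [hsplit, hsplit2]
      congr 1
      refine Finset.sum_congr rfl fun k hk => ?_
      rw [show i + d + k = j + k from by omega]
    have hcw : IsWalk E (fun m => p (i + m)) d (p i) (p i) := by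
      refine ⟨by simp, ?_, ?_⟩
      · show p (i + d) = p i
        rw [hid]; exact hpij.symm
      · intro m hm
        show E (p (i + m)) (p (i + (m + 1)))
        rw [show i + (m + 1) = (i + m) + 1 from by omega]
        exact he (i + m) (by omega)
    have hcyc : 0 ≤ ∑ k ∈ Finset.range d, w (p (i + k)) (p (i + k + 1)) := by
      have h0' := hnoneg (p i) (fun m => p (i + m)) d hd1 hcw
        ⟨p, i, h0, rfl, fun k hk => he k (by omega)⟩
      unfold walkWeight at h0'
      simpa [Nat.add_assoc] using h0'
    exact ⟨q, l', by omega, ⟨hq0, hqend, hqedge⟩, by rw [hqw, hpw]; linarith⟩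
  obtain ⟨a, b, hab, hpab⟩ := Fintype.exists_ne_map_eq_of_card_lt
    (fun k : Fin (l + 1) => p k) (by simp; omega)
  rcases lt_or_gt_of_ne hab with h | h
  · exact key a b h (by omega) hpab
  · exact key b a h (by omega) hpab.symm

/-- Path shortening under no reachable negative cycle: any walk from `s` to `v`
can be replaced by one with at most `|V| - 1` edges of no larger weight; hence the
infimum of walk weights equals the infimum over walks with at most `|V| - 1` edges. -/
theorem walk_shortening
    {V : Type*} [Fintype V] [Nonempty V]
    (E : V → V → Prop) (w : V → V → ℝ) (s : V)
    (hnoneg : ∀ (c : V) (p : ℕ → V) (l : ℕ), 1 ≤ l → IsWalk E p l c c →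
      (∃ (q : ℕ → V) (lq : ℕ), IsWalk E q lq s c) → 0 ≤ walkWeight w p l) :
    (∀ (v : V) (p : ℕ → V) (l : ℕ), IsWalk E p l s v →
      ∃ (p' : ℕ → V) (l' : ℕ), l' ≤ Fintype.card V - 1 ∧ IsWalk E p' l' s v ∧
        walkWeight w p' l' ≤ walkWeight w p l) ∧
    (∀ v : V,
      (⨅ (p : ℕ → V) (l : ℕ) (_ : IsWalk E p l s v), (walkWeight w p l : EReal)) =
      ⨅ (p : ℕ → V) (l : ℕ) (_ : l ≤ Fintype.card V - 1) (_ : IsWalk E p l s v),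
        (walkWeight w p l : EReal)) := by
  have part1 : ∀ (v : V) (p : ℕ → V) (l : ℕ), IsWalk E p l s v →
      ∃ (p' : ℕ → V) (l' : ℕ), l' ≤ Fintype.card V - 1 ∧ IsWalk E p' l' s v ∧
        walkWeight w p' l' ≤ walkWeight w p l := by
    intro v p l
    induction l using Nat.strong_induction_on generalizing p with
    | _ l ih =>
      intro hw
      by_cases h : l ≤ Fintype.card V - 1
      · exact ⟨p, l, h, hw, le_refl _⟩
      · have hcard : Fintype.card V ≤ l := by
          have := Fintype.card_pos (α := V); omega
        obtain ⟨q, l', hlt, hq, hle⟩ := splice_step E w s hnoneg v p l hw hcard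
        obtain ⟨p', l'', h1, h2, h3⟩ := ih l' hlt q hq
        exact ⟨p', l'', h1, h2, h3.trans hle⟩
  refine ⟨part1, fun v => le_antisymm ?_ ?_⟩
  · refine le_iInf fun p => le_iInf fun l => le_iInf fun _ => le_iInf fun hw => ?_
    exact iInf_le_of_le p (iInf_le_of_le l (iInf_le _ hw))
  · refine le_iInf fun p => le_iInf fun l => le_iInf fun hw => ?_
    obtain ⟨p', l', h1, h2, h3⟩ := part1 v p l hw
    exact iInf_le_of_le p' (iInf_le_of_le l' (iInf_le_of_le h1
      (iInf_le_of_le h2 (EReal.coe_le_coe_iff.2 h3))))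
end

section
/- Correctness of Bellman–Ford after |V| − 1 iterations (Theorem 2.3, first part). Suppose every cycle reachable from s has nonnegative total weight. Then for every vertex v, the Bellman–Ford iterate satisfies d (|V|−1) v = the infimum of the weights of all walks from s to v (with value ⊤ exactly when v is not reachable from s); that is, d (|V|−1) v equals the true shortest-path distance d*(v). -/
section Walks

variable {V : Type*} {E : V → V → Prop} {w : V → V → ℝ} {p q : ℕ → V} {a b c : V}

def walkAppend (p : ℕ → V) (m : ℕ) (q : ℕ → V) : ℕ → V :=
  fun k => if k ≤ m then p k else q (k - m)

def edgeWalk (a b : V) : ℕ → V :=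
  fun k => if k = 0 then a else b

lemma walkWeight_congr {l : ℕ} (h : ∀ k ≤ l, p k = q k) :
    walkWeight w p l = walkWeight w q l :=
  Finset.sum_congr rfl fun k hk => by
    rw [Finset.mem_range] at hk
    rw [h k hk.le, h (k + 1) hk]

lemma walkWeight_add (p : ℕ → V) (m n : ℕ) :
    walkWeight w p (m + n) = walkWeight w p m + walkWeight w (fun k => p (m + k)) n := by
  simp only [walkWeight, Finset.sum_range_add, add_assoc]

lemma walkWeight_walkAppend {m : ℕ} (h : p m = q 0) (n : ℕ) :
    walkWeight w (walkAppend p m q) (m + n) = walkWeight w p m + walkWeight w q n := by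
  rw [walkWeight_add]
  congr 1
  · exact walkWeight_congr fun k hk => if_pos hk
  · refine walkWeight_congr fun k _ => ?_
    rcases k.eq_zero_or_pos with rfl | hk
    · simp [walkAppend, h]
    · simp [walkAppend, hk.ne']

lemma walkWeight_edgeWalk (a b : V) : walkWeight w (edgeWalk a b) 1 = w a b := by
  simp [walkWeight, edgeWalk]

lemma isWalk_edgeWalk (h : E a b) : IsWalk E (edgeWalk a b) 1 a b :=
  ⟨rfl, rfl, fun k hk => by obtain rfl : k = 0 := (by omega); exact h⟩

lemma IsWalk.take {l : ℕ} (h : IsWalk E p l a b) {i : ℕ} (hi : i ≤ l) : IsWalk E p i a (p i) :=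
  ⟨h.1, rfl, fun k hk => h.2.2 k (by omega)⟩

lemma IsWalk.drop {l : ℕ} (h : IsWalk E p l a b) {i : ℕ} (hi : i ≤ l) :
    IsWalk E (fun k => p (i + k)) (l - i) (p i) b :=
  ⟨rfl, by dsimp only; rw [Nat.add_sub_cancel' hi, h.2.1], fun k hk => h.2.2 (i + k) (by omega)⟩

lemma IsWalk.append {m n : ℕ} (hp : IsWalk E p m a b) (hq : IsWalk E q n b c) :
    IsWalk E (walkAppend p m q) (m + n) a c := by
  refine ⟨by simp [walkAppend, hp.1], ?_, fun k hk => ?_⟩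
  · rcases n.eq_zero_or_pos with rfl | hn
    · simp [walkAppend, hp.2.1, ← hq.1, hq.2.1]
    · simp [walkAppend, hn.ne', hq.2.1]
  · rcases lt_trichotomy k m with hkm | rfl | hkm
    · simpa [walkAppend, hkm.le, Nat.succ_le_of_lt hkm] using hp.2.2 k hkm
    · simpa [walkAppend, hp.2.1, hq.1] using hq.2.2 0 (by omega)
    · have hstep : k + 1 - m = k - m + 1 := by omega
      simpa [walkAppend, hkm.not_ge, show ¬k + 1 ≤ m by omega, hstep] using
        hq.2.2 (k - m) (by omega)

lemma exists_lt_le_eq_of_card_le [Fintype V] (p : ℕ → V) {l : ℕ} (hl : Fintype.card V ≤ l) :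
    ∃ i j, i < j ∧ j ≤ l ∧ p i = p j := by
  obtain ⟨x, y, hxy, hpxy⟩ := Fintype.exists_ne_map_eq_of_card_lt (fun i : Fin (l + 1) => p i)
    (by rw [Fintype.card_fin]; omega)
  rcases lt_or_gt_of_ne hxy with h | h
  · exact ⟨x, y, h, Nat.lt_succ_iff.1 y.2, hpxy⟩
  · exact ⟨y, x, h, Nat.lt_succ_iff.1 x.2, hpxy.symm⟩

lemma IsWalk.removeLoop {l i j : ℕ} (h : IsWalk E p l a b) (hij : i ≤ j) (hjl : j ≤ l)
    (heq : p i = p j) :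
    IsWalk E (walkAppend p i fun k => p (j + k)) (i + (l - j)) a b :=
  (h.take (hij.trans hjl)).append (heq ▸ h.drop hjl)

lemma walkWeight_removeLoop {l i j : ℕ} (hij : i ≤ j) (hjl : j ≤ l) (heq : p i = p j) :
    walkWeight w p l = walkWeight w (walkAppend p i fun k => p (j + k)) (i + (l - j)) +
      walkWeight w (fun k => p (i + k)) (j - i) := by
  have hsplit : walkWeight w p l = walkWeight w p i + (walkWeight w (fun k => p (i + k)) (j - i) +
      walkWeight w (fun k => p (j + k)) (l - j)) := by
    conv_lhs => rw [show l = i + (j - i + (l - j)) by omega, walkWeight_add, walkWeight_add]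
    congr 3
    ext k
    congr 1
    omega
  rw [hsplit, walkWeight_walkAppend heq]
  ring

end Walks

section ShortWalks

variable {V : Type*} {E : V → V → Prop} {w : V → V → ℝ} {s : V}

def NonnegReachableCycles (E : V → V → Prop) (w : V → V → ℝ) (s : V) : Prop :=
  ∀ (c : V) (p : ℕ → V) (l : ℕ), 1 ≤ l → IsWalk E p l c c →
    (∃ (q : ℕ → V) (lq : ℕ), IsWalk E q lq s c) → 0 ≤ walkWeight w p l

lemma NonnegReachableCycles.exists_walk_length_lt_card [Fintype V]
    (hcyc : NonnegReachableCycles E w s) {p : ℕ → V} {l : ℕ} {v : V} (hp : IsWalk E p l s v) :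
    ∃ p' l', l' < Fintype.card V ∧ IsWalk E p' l' s v ∧ walkWeight w p' l' ≤ walkWeight w p l := by
  induction l using Nat.strong_induction_on generalizing p with
  | _ l ih =>
  by_cases hl : l < Fintype.card V
  · exact ⟨p, l, hl, hp, le_rfl⟩
  obtain ⟨i, j, hij, hjl, heq⟩ := exists_lt_le_eq_of_card_le p (not_lt.1 hl)
  have hloop : IsWalk E (fun k => p (i + k)) (j - i) (p i) (p i) := by
    simpa [Nat.add_sub_cancel' hij.le, ← heq] using (hp.drop (hij.le.trans hjl)).take
      (show j - i ≤ l - i by omega)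
  have hloop_nonneg : 0 ≤ walkWeight w (fun k => p (i + k)) (j - i) :=
    hcyc _ _ _ (by omega) hloop ⟨p, i, hp.take (hij.le.trans hjl)⟩
  obtain ⟨p', l', hl', hp', hle⟩ := ih _ (by omega) (hp.removeLoop hij.le hjl heq)
  refine ⟨p', l', hl', hp', hle.trans ?_⟩
  rw [walkWeight_removeLoop hij.le hjl heq]
  linarith

end ShortWalks

section BellmanFord

variable {V : Type*} {E : V → V → Prop} {w : V → V → ℝ} {s : V}

lemma BF_antitone : Antitone (BF E w s) :=
  antitone_nat_of_succ_le fun _ _ => min_le_left _ _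

lemma BF_le_walkWeight {p : ℕ → V} {l : ℕ} {v : V} (hp : IsWalk E p l s v) :
    BF E w s l v ≤ walkWeight w p l := by
  induction l generalizing v with
  | zero =>
    obtain rfl : v = s := hp.2.1.symm.trans hp.1
    simp [BF, walkWeight]
  | succ l ih =>
    obtain rfl := hp.2.1
    calc BF E w s (l + 1) (p (l + 1))
        ≤ BF E w s l (p l) + w (p l) (p (l + 1)) :=
          (min_le_right _ _).trans (iInf_le _ (⟨p l, hp.2.2 l l.lt_succ_self⟩ : {u // E u (p (l + 1))}))
      _ ≤ walkWeight w p l + w (p l) (p (l + 1)) := by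
          gcongr
          exact ih (hp.take l.le_succ)
      _ = walkWeight w p (l + 1) := by
          simp only [walkWeight, Finset.sum_range_succ, EReal.coe_add]

lemma BF_eq_top_or_exists_walk [Finite V] (t : ℕ) (v : V) :
    BF E w s t v = ⊤ ∨ ∃ p l, IsWalk E p l s v ∧ BF E w s t v = walkWeight w p l := by
  induction t generalizing v with
  | zero =>
    by_cases hv : v = s
    · subst hv
      exact Or.inr ⟨fun _ => v, 0, ⟨rfl, rfl, by simp⟩, by simp [BF, walkWeight]⟩
    · exact Or.inl (by simp [BF, hv])
  | succ t ih =>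
    rw [BF]
    rcases min_choice (BF E w s t v) (⨅ u : {u // E u v}, BF E w s t u + w u v) with h | h
    · rw [h]
      exact ih v
    rw [h]
    rcases isEmpty_or_nonempty {u // E u v} with _ | _
    · exact Or.inl (iInf_of_empty _)
    obtain ⟨⟨u, hu⟩, hmin⟩ :=
      exists_eq_ciInf_of_finite (f := fun u : {u // E u v} => BF E w s t u + w u v)
    rw [← hmin]
    rcases ih u with htop | ⟨q, l, hq, hql⟩
    · exact Or.inl (by simp [htop])
    · refine Or.inr ⟨_, _, hq.append (isWalk_edgeWalk hu), ?_⟩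
      rw [walkWeight_walkAppend (hq.2.1.trans rfl), hql, walkWeight_edgeWalk, EReal.coe_add]

end BellmanFord

theorem bellmanFord_correct_general
    {V : Type*} [Fintype V]
    (E : V → V → Prop) (w : V → V → ℝ) (s : V)
    (hnoneg : ∀ (c : V) (p : ℕ → V) (l : ℕ), 1 ≤ l → IsWalk E p l c c →
      (∃ (q : ℕ → V) (lq : ℕ), IsWalk E q lq s c) → 0 ≤ walkWeight w p l) :
    (∀ v : V,
      BF E w s (Fintype.card V - 1) v =
        ⨅ (p : ℕ → V) (l : ℕ) (_ : IsWalk E p l s v), (walkWeight w p l : EReal)) ∧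
    (∀ v : V,
      BF E w s (Fintype.card V - 1) v = ⊤ ↔
        ¬ ∃ (p : ℕ → V) (l : ℕ), IsWalk E p l s v) := by
  have hdist : ∀ v, BF E w s (Fintype.card V - 1) v =
      ⨅ (p : ℕ → V) (l : ℕ) (_ : IsWalk E p l s v), (walkWeight w p l : EReal) := by
    intro v
    refine le_antisymm (le_iInf₂ fun p l => le_iInf fun hp => ?_) ?_
    · obtain ⟨p', l', hl', hp', hle⟩ :=
        NonnegReachableCycles.exists_walk_length_lt_card hnoneg hp
      calc BF E w s (Fintype.card V - 1) v ≤ BF E w s l' v := BF_antitone (by omega) v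
        _ ≤ walkWeight w p' l' := BF_le_walkWeight hp'
        _ ≤ walkWeight w p l := EReal.coe_le_coe_iff.2 hle
    · rcases BF_eq_top_or_exists_walk (E := E) (w := w) (s := s) (Fintype.card V - 1) v with
        h | ⟨p, l, hp, h⟩
      · exact h ▸ le_top
      · exact h ▸ iInf₂_le_of_le p l (iInf_le _ hp)
  refine ⟨hdist, fun v => ?_⟩
  simp [hdist v, iInf_eq_top]

/-- Correctness of Bellman–Ford after `|V| - 1` iterations: if every cycle
reachable from `s` has nonnegative total weight, then `d (|V|-1) v` equals the
infimum of the weights of all walks from `s` to `v`, with value `⊤` exactly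
when `v` is not reachable from `s`. -/
theorem bellmanFord_correct
    {V : Type*} [Fintype V] [Nonempty V]
    (E : V → V → Prop) (w : V → V → ℝ) (s : V)
    (hnoneg : ∀ (c : V) (p : ℕ → V) (l : ℕ), 1 ≤ l → IsWalk E p l c c →
      (∃ (q : ℕ → V) (lq : ℕ), IsWalk E q lq s c) → 0 ≤ walkWeight w p l) :
    (∀ v : V,
      BF E w s (Fintype.card V - 1) v =
        ⨅ (p : ℕ → V) (l : ℕ) (_ : IsWalk E p l s v), (walkWeight w p l : EReal)) ∧
    (∀ v : V,
      BF E w s (Fintype.card V - 1) v = ⊤ ↔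
        ¬ ∃ (p : ℕ → V) (l : ℕ), IsWalk E p l s v) :=
  bellmanFord_correct_general E w s hnoneg
end
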